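/- Assume λ = μ⁺, κ < μ, θ = λ, and μ = μ^κ (cardinal exponentiation), with λ ≥ θ ≥ κ ≥ ℵ₀. Then the class 𝔥_{λ, λ, κ} has a we-universal member. -/

import Mathlib

open Cardinal Set

abbrev Ordi := Ordinal.{0}
abbrev Cardi := Cardinal.{0}

/-- the set of ordinals `s` has order type `δ`. -/
def OtpEq (s : Set Ordi) (δ : Ordi) : Prop := Nonempty (s ≃o Set.Iio δ)

/-- `f` is a partial function from `λ` to `λ`. -/
def PFDomRan (lam : Cardi) (f : Ordi →. Ordi) : Prop :=
  f.Dom ⊆ Set.Iio lam.ord ∧ ∀ a b, b ∈ f a → b < lam.ord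

/-- `f` is strictly increasing (on its domain). -/
def PFInc (f : Ordi →. Ordi) : Prop :=
  ∀ a b c d, c ∈ f a → d ∈ f b → a < b → c < d

/-- `f` is one-to-one (on its domain). -/
def PFInj (f : Ordi →. Ordi) : Prop :=
  ∀ a b c, c ∈ f a → c ∈ f b → a = b

/-- the partial function `g` extends the partial function `f`. -/
def PFLe (f g : Ordi →. Ordi) : Prop := ∀ a b, b ∈ f a → b ∈ g a

/-- the total function `g` extends the partial function `f`. -/
def TotalExt (g : Ordi → Ordi) (f : Ordi →. Ordi) : Prop :=
  ∀ a b, b ∈ f a → g a = b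

/-- `g` is a total function from `λ` to `λ`. -/
def TotalFn (lam : Cardi) (g : Ordi → Ordi) : Prop :=
  ∀ a < lam.ord, g a < lam.ord

/-- `g` is injective as a function from `λ` to `λ`. -/
def TotalInj (lam : Cardi) (g : Ordi → Ordi) : Prop :=
  Set.InjOn g (Set.Iio lam.ord)

def Pr (lam kap : Cardi) : Prop :=
  ∃ F : Set (Ordi →. Ordi),
    #F ≤ Cardinal.lift.{1} lam ∧
    (∀ f ∈ F, PFDomRan lam f ∧ PFInc f ∧ OtpEq f.Dom kap.ord) ∧
    (∀ f ∈ F, ∀ g ∈ F, f ≠ g →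
      #(↥(f.Dom ∩ g.Dom)) < Cardinal.lift.{1} kap) ∧
    (∀ g : Ordi →. Ordi, PFDomRan lam g → PFInc g →
      #(↥g.Dom) = Cardinal.lift.{1} lam → ∃ f ∈ F, PFLe f g)

def Ps (lam kap : Cardi) : Prop :=
  ∃ F : Set (Ordi →. Ordi),
    #F ≤ Cardinal.lift.{1} lam ∧
    (∀ f ∈ F, PFDomRan lam f ∧ PFInc f ∧ OtpEq f.Dom kap.ord) ∧
    (∀ f ∈ F, ∀ g ∈ F, f ≠ g →
      #(↥(f.Dom ∩ g.Dom)) < Cardinal.lift.{1} kap) ∧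
    (∀ g : Ordi → Ordi, TotalFn lam g → TotalInj lam g →
      ∃ f ∈ F, TotalExt g f)

def Pr' (lam : Cardi) (δ : Ordi) : Prop :=
  ∃ F : Set (Ordi →. Ordi),
    #F ≤ Cardinal.lift.{1} lam ∧
    (∀ f ∈ F, PFDomRan lam f ∧ PFInj f ∧ OtpEq f.Dom δ) ∧
    (∀ f ∈ F, ∀ g ∈ F, f ≠ g →
      (∃ c ∈ f.Dom, ∀ x ∈ f.Dom ∩ g.Dom, x < c) ∧
      (∃ c ∈ g.Dom, ∀ x ∈ f.Dom ∩ g.Dom, x < c)) ∧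
    (∀ g : Ordi →. Ordi, PFDomRan lam g → PFInj g →
      #(↥g.Dom) = Cardinal.lift.{1} lam → ∃ f ∈ F, PFLe f g)

def Ps' (lam : Cardi) (δ : Ordi) : Prop :=
  ∃ F : Set (Ordi →. Ordi),
    #F ≤ Cardinal.lift.{1} lam ∧
    (∀ f ∈ F, PFDomRan lam f ∧ PFInj f ∧ OtpEq f.Dom δ) ∧
    (∀ f ∈ F, ∀ g ∈ F, f ≠ g →
      (∃ c ∈ f.Dom, ∀ x ∈ f.Dom ∩ g.Dom, x < c) ∧
      (∃ c ∈ g.Dom, ∀ x ∈ f.Dom ∩ g.Dom, x < c)) ∧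
    (∀ g : Ordi → Ordi, TotalFn lam g → TotalInj lam g →
      ∃ f ∈ F, TotalExt g f)

def Pr3 (chi lam mu : Cardi) (α : Ordi) : Prop :=
  ∃ F : Set (Ordi →. Ordi),
    #F ≤ Cardinal.lift.{1} chi ∧
    (∀ f ∈ F, f.Dom ⊆ Set.Iio mu.ord ∧ (∀ a b, b ∈ f a → b < lam.ord) ∧
      OtpEq f.Dom α) ∧
    (∀ g : Ordi → Ordi, (∀ a < mu.ord, g a < lam.ord) →
      ∃ f ∈ F, TotalExt g f)

/-- weak embedding of graphs: injective, maps edges to edges. -/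
def WeakEmb {V W : Type*} (G : SimpleGraph V) (H : SimpleGraph W) (f : V → W) : Prop :=
  Function.Injective f ∧ ∀ a b, G.Adj a b → H.Adj (f a) (f b)

/-- strong embedding of graphs: injective, maps edges to edges and non-edges to non-edges. -/
def StrongEmb {V W : Type*} (G : SimpleGraph V) (H : SimpleGraph W) (f : V → W) : Prop :=
  Function.Injective f ∧ ∀ a b, G.Adj a b ↔ H.Adj (f a) (f b)

/-- the complete `(θ, κ)`-bipartite graph cannot be weakly embedded into `G`. -/
def NoKbip {V : Type} (G : SimpleGraph V) (θ κ : Cardi) : Prop :=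
  ¬ ∃ A B : Set V, Disjoint A B ∧ #A = θ ∧ #B = κ ∧
      ∀ a ∈ A, ∀ b ∈ B, G.Adj a b

/-- `G` is bipartite. -/
def IsBipartite {V : Type*} (G : SimpleGraph V) : Prop :=
  ∃ s : Set V, ∀ a b, G.Adj a b → (a ∈ s ↔ b ∉ s)

/-- `♣_S` where `S` is a set of ordinals below `λ`. -/
def Clubsuit (lam : Cardi) (S : Set Ordi) : Prop :=
  ∃ A : Ordi → Set Ordi,
    (∀ δ ∈ S, (δ ≠ 0 ∧ ∀ a < δ, Order.succ a < δ) →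
      A δ ⊆ Set.Iio δ ∧ (∀ b < δ, ∃ x ∈ A δ, b < x)) ∧
    (∀ X ⊆ Set.Iio lam.ord, (∀ b < lam.ord, ∃ x ∈ X, b < x) →
      ∃ δ ∈ S, (δ ≠ 0 ∧ ∀ a < δ, Order.succ a < δ) ∧ A δ ⊆ X)

noncomputable def Ubd (kap lam : Cardi) : Cardi :=
  sInf { c : Cardi | ∃ P : Set (Set Ordi), #P = Cardinal.lift.{1} c ∧
    (∀ A ∈ P, A ⊆ Set.Iio lam.ord ∧ #(↥A) = Cardinal.lift.{1} kap) ∧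
    ∀ f : Ordi → Ordi, (∀ i < kap.ord, f i < lam.ord) →
      ∃ A ∈ P, ∀ b < kap.ord, ∃ i, b ≤ i ∧ i < kap.ord ∧ f i ∈ A }

/-!
Let `λ = μ⁺`. The universal graph lives on triples `(i, ℓ, n)` with `i < λ` a block and
`ℓ, n < μ`. Every block is a clique, and the label `ℓ` codes an *admissible* set `Y` of vertices:
at most `κ` of them, all in blocks `< i`, and fewer than `κ` in blocks `≤ g` for each `g < i`;
the vertex `(i, ℓ, n)` is joined to all of `Y`. As `μ ^ κ = μ`, labels `< μ` suffice to code every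
admissible set. A copy of `K_{λ,κ}` would have its `κ`-side below some block `u`; a vertex in a
block beyond `u` adjacent to all of it would have an admissible set with `κ` points in blocks
`≤ u`, so the `λ`-side lies in the blocks `≤ u`, which hold only `μ` vertices.

Conversely, in a graph `G` without `K_{λ,κ}` any `κ` vertices have at most `μ` common neighbours.
Closing the initial segments of `λ` under common neighbourhoods of `κ`-sets (a `κ⁺`-step
iteration, again using `μ ^ κ = μ`) yields a filtration of `G` by closed sets of size `μ`; the
rank of `d` is the first stage containing it. By closedness `d` has fewer than `κ` neighbours of
rank `≤ g` for each `g` below its rank, hence at most `κ` neighbours of smaller rank, and their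
images form an admissible set. Sending `d`, by recursion on rank, to its rank, the label of that
set and a counter injective within the rank is therefore a weak embedding into the universal graph.
-/

namespace KBipartiteFree

universe u

open Function

section CardinalFacts

theorem mk_iUnion_le_of_le {α ι : Type u} {c : Cardinal.{u}} (hc : ℵ₀ ≤ c) {f : ι → Set α}
    (hι : #ι ≤ c) (hf : ∀ i, #(f i) ≤ c) : #(⋃ i, f i) ≤ c :=
  (mk_iUnion_le f).trans <| (mul_le_mul' hι (ciSup_le' hf)).trans (mul_eq_self hc).le

theorem exists_forall_lt_of_mk_lt {c : Cardinal.{u}} (hc : c.IsRegular) {s : Set c.ord.ToType}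
    (hs : #s < c) : ∃ u, ∀ x ∈ s, x < u :=
  not_isCofinal_iff.mp fun h => (Order.cof_le h).not_gt <| by
    rwa [Ordinal.cof_toType, hc.cof_ord]

theorem mk_Iic_toType_succ_le {c : Cardinal.{u}} (hc : ℵ₀ ≤ c) (v : (Order.succ c).ord.ToType) :
    #(Iic v) ≤ c :=
  Order.lt_succ_iff.mp <| by
    simpa using mk_Iic_lt v (by simp) (by simpa using hc.trans (Order.le_succ c))

theorem mk_toType_succ_prod {c : Cardinal.{u}} (hc : ℵ₀ ≤ c) :
    #((Order.succ c).ord.ToType × c.ord.ToType × c.ord.ToType) = Order.succ c := by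
  simp only [mk_prod, lift_id, mk_ord_toType, mul_eq_self hc]
  exact mul_eq_left (hc.trans (Order.le_succ c)) (Order.le_succ c) (aleph0_pos.trans_le hc).ne'

theorem mk_Iio_toType_lt {c : Cardinal.{u}} (v : c.ord.ToType) : #(Iio v) < c := by
  simpa using mk_Iio_lt v (by simp)

theorem exists_injective_prod_of_mk_fiber_le {α β N : Type u} (ρ : α → β)
    (h : ∀ i, #{x // ρ x = i} ≤ #N) : ∃ cnt : α → N, Injective fun x => (ρ x, cnt x) := by
  have e : ∀ i, {x // ρ x = i} ↪ N := fun i => Classical.choice ((le_def _ _).mp (h i))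
  have he : ∀ i x (hx : ρ x = i), e (ρ x) ⟨x, rfl⟩ = e i ⟨x, hx⟩ := by
    rintro i x rfl
    rfl
  refine ⟨fun x => e (ρ x) ⟨x, rfl⟩, fun a b hab => ?_⟩
  obtain ⟨hρ, hcnt⟩ := Prod.mk.inj hab
  replace hcnt : e (ρ a) ⟨a, rfl⟩ = e (ρ b) ⟨b, rfl⟩ := hcnt
  rw [he _ a hρ] at hcnt
  exact congrArg Subtype.val ((e _).injective hcnt)

variable {ι : Type u} [LinearOrder ι] [WellFoundedLT ι]

theorem mk_le_of_forall_mk_Iio_lt {κ : Cardinal.{u}} (h : ∀ x : ι, #(Iio x) < κ) : #ι ≤ κ := by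
  by_contra! hκ
  obtain ⟨x, hx⟩ := Ordinal.typein_surj (α := ι) (· < ·)
    ((Cardinal.ord_lt_ord.mpr hκ).trans_le (ord_le_type _))
  have := congrArg Ordinal.card hx
  simp only [Ordinal.card_typein, card_ord] at this
  exact (h x).ne this

theorem mk_le_of_forall_mk_rank_le_lt {α : Type u} {κ : Cardinal.{u}} (hκ : ℵ₀ ≤ κ)
    (r : α → ι) {S : Set α} (h : ∀ x ∈ S, #{y ∈ S | r y ≤ r x} < κ) : #S ≤ κ := by
  have hR : #(r '' S) ≤ κ := by
    refine mk_le_of_forall_mk_Iio_lt fun ⟨_, x, hx, hrx⟩ => lt_of_le_of_lt ?_ (h x hx)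
    subst hrx
    calc #(Iio (⟨r x, x, hx, rfl⟩ : r '' S))
        = #(Subtype.val '' Iio (⟨r x, x, hx, rfl⟩ : r '' S)) :=
          (mk_image_eq Subtype.val_injective).symm
      _ ≤ #(r '' {y ∈ S | r y ≤ r x}) := by
          refine mk_le_mk_of_subset ?_
          rintro _ ⟨⟨_, y, hy, rfl⟩, hlt, rfl⟩
          exact ⟨y, ⟨hy, le_of_lt hlt⟩, rfl⟩
      _ ≤ _ := mk_image_le
  have hcover : S ⊆ ⋃ g : r '' S, {y ∈ S | r y ≤ g} := fun y hy =>
    mem_iUnion.mpr ⟨⟨r y, y, hy, rfl⟩, hy, le_rfl⟩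
  refine (mk_le_mk_of_subset hcover).trans (mk_iUnion_le_of_le hκ hR ?_)
  rintro ⟨_, x, hx, rfl⟩
  exact (h x hx).le

end CardinalFacts

section KappaClosure

variable {α : Type u} (c : Set α → Set α) (κ : Cardinal.{u})

def IsClosedUnder (T : Set α) : Prop := ∀ B ⊆ T, #B = κ → c B ⊆ T

def kClosure : ClosureOperator (Set α) :=
  .ofCompletePred (IsClosedUnder c κ) fun _ hs B hB hBκ =>
    subset_sInter fun T hT => hs T hT B (hB.trans (sInter_subset_of_mem hT)) hBκ

theorem isClosedUnder_kClosure (S : Set α) : IsClosedUnder c κ (kClosure c κ S) :=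
  (kClosure c κ).isClosed_closure S

def closureStep (X : Set α) : Set α :=
  X ∪ ⋃ B : {B : Set α // B ⊆ X ∧ #B = κ}, c B.1

noncomputable def closureIter (S : Set α) : (Order.succ κ).ord.ToType → Set α :=
  wellFounded_lt.fix fun k ih => S ∪ ⋃ j : Iio k, closureStep c κ (ih j j.2)

variable {c κ}

theorem closureIter_eq (S : Set α) (k : (Order.succ κ).ord.ToType) :
    closureIter c κ S k = S ∪ ⋃ j : Iio k, closureStep c κ (closureIter c κ S j) :=
  wellFounded_lt.fix_eq _ k

theorem closureStep_closureIter_subset {S : Set α} {j k : (Order.succ κ).ord.ToType}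
    (h : j < k) : closureStep c κ (closureIter c κ S j) ⊆ closureIter c κ S k := by
  rw [closureIter_eq S k]
  exact subset_union_of_subset_right
    (subset_iUnion (fun i : Iio k => closureStep c κ (closureIter c κ S i)) ⟨j, h⟩) _

variable {μ : Cardinal.{u}} (hμ : ℵ₀ ≤ μ) (hpow : μ ^ κ = μ) (hc : ∀ B : Set α, #B = κ → #(c B) ≤ μ)
include hμ hpow hc

theorem mk_closureStep_le {X : Set α} (hX : #X ≤ μ) : #(closureStep c κ X) ≤ μ := by
  have hsubsets : #{B : Set α // B ⊆ X ∧ #B = κ} ≤ μ :=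
    calc #{B : Set α // B ⊆ X ∧ #B = κ}
        ≤ #{B : Set α // B ⊆ X ∧ #B ≤ κ} :=
          mk_le_mk_of_subset (α := Set α) fun _ hB => ⟨hB.1, hB.2.le⟩
      _ ≤ max #X ℵ₀ ^ κ := mk_bounded_subset_le X κ
      _ ≤ μ ^ κ := power_le_power_right (max_le hX hμ)
      _ = μ := hpow
  exact (mk_union_le _ _).trans <| (add_le_add hX
    (mk_iUnion_le_of_le hμ hsubsets fun B => hc B.1 B.2.2)).trans (add_eq_self hμ).le

theorem mk_closureIter_le (hκμ : κ ≤ μ) {S : Set α} (hS : #S ≤ μ)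
    (k : (Order.succ κ).ord.ToType) : #(closureIter c κ S k) ≤ μ := by
  induction k using WellFoundedLT.induction with
  | ind k ih =>
    rw [closureIter_eq]
    refine (mk_union_le _ _).trans <| (add_le_add hS ?_).trans (add_eq_self hμ).le
    refine mk_iUnion_le_of_le hμ ?_ fun j => mk_closureStep_le hμ hpow hc (ih j j.2)
    exact (Order.lt_succ_iff.mp (mk_Iio_toType_lt k)).trans hκμ

theorem exists_isClosedUnder_superset (hκ : ℵ₀ ≤ κ) (hκμ : κ < μ) {S : Set α} (hS : #S ≤ μ) :
    ∃ T, S ⊆ T ∧ IsClosedUnder c κ T ∧ #T ≤ μ := by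
  let T := ⋃ k, closureStep c κ (closureIter c κ S k)
  refine ⟨T, ?_, ?_, ?_⟩
  · obtain ⟨k⟩ : Nonempty (Order.succ κ).ord.ToType := by
      rw [← mk_ne_zero_iff]; simp
    refine subset_iUnion_of_subset k (subset_union_of_subset_left ?_ _)
    rw [closureIter_eq]
    exact subset_union_left
  · intro B hBT hBκ
    choose stage hstage using fun b : B => mem_iUnion.mp (hBT b.2)
    obtain ⟨k, hk⟩ := exists_forall_lt_of_mk_lt (isRegular_succ hκ)
      (mk_range_le.trans_lt (hBκ ▸ Order.lt_succ κ) : #(range stage) < Order.succ κ)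
    have hB : B ⊆ closureIter c κ S k := fun b hb =>
      closureStep_closureIter_subset (hk _ (mem_range_self ⟨b, hb⟩)) (hstage ⟨b, hb⟩)
    exact subset_iUnion_of_subset k (subset_union_of_subset_right
      (subset_iUnion (fun B : {B : Set α // B ⊆ closureIter c κ S k ∧ #B = κ} => c B.1)
        ⟨B, hB, hBκ⟩) _)
  · exact mk_iUnion_le_of_le hμ (by simpa using Order.succ_le_of_lt hκμ)
      fun k => mk_closureStep_le hμ hpow hc (mk_closureIter_le hμ hpow hc hκμ.le hS k)

end KappaClosure

section Rank

def commonNbhd {V : Type u} (G : SimpleGraph V) (B : Set V) : Set V :=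
  {v | ∀ b ∈ B, G.Adj v b}

theorem mk_commonNbhd_lt {V : Type} {G : SimpleGraph V} {θ κ : Cardi} (hG : NoKbip G θ κ)
    {B : Set V} (hB : #B = κ) : #(commonNbhd G B) < θ := by
  by_contra! h
  obtain ⟨A, hA, hAθ⟩ := le_mk_iff_exists_subset.mp h
  exact hG ⟨A, B, disjoint_left.mpr fun a ha hb => G.irrefl (hA ha a hb), hAθ, hB,
    fun a ha b hb => hA ha b hb⟩

variable {V : Type u} [LinearOrder V] [WellFoundedLT V] {κ μ : Cardinal.{u}}

theorem exists_rank (hκ : ℵ₀ ≤ κ) (hκμ : κ < μ) (hpow : μ ^ κ = μ) (hV : ∀ v : V, #(Iic v) ≤ μ)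
    (G : SimpleGraph V) (hG : ∀ B : Set V, #B = κ → #(commonNbhd G B) ≤ μ) :
    ∃ ρ : V → V, (∀ v, #{x | ρ x ≤ v} ≤ μ) ∧
      ∀ d, ∀ v < ρ d, #{x | G.Adj d x ∧ ρ x ≤ v} < κ := by
  let W v := kClosure (commonNbhd G) κ (Iic v)
  have hW : ∀ v, #(W v) ≤ μ := fun v => by
    obtain ⟨T, hST, hT, hTμ⟩ :=
      exists_isClosedUnder_superset (hκ.trans hκμ.le) hpow hG hκ hκμ (hV v)
    exact (mk_le_mk_of_subset ((kClosure _ _).closure_min hST hT)).trans hTμ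
  have hmem : ∀ v, v ∈ W v := fun v => (kClosure _ _).le_closure _ self_mem_Iic
  let ρ d := wellFounded_lt.min {v | d ∈ W v} ⟨d, hmem d⟩
  have hρ : ∀ {d v}, ρ d ≤ v ↔ d ∈ W v := fun {d v} =>
    ⟨fun h => (kClosure _ _).monotone (Iic_subset_Iic.mpr h)
        (wellFounded_lt.min_mem {v | d ∈ W v} ⟨d, hmem d⟩),
      fun h => wellFounded_lt.min_le (s := {v | d ∈ W v}) h⟩
  refine ⟨ρ, fun v => (mk_le_mk_of_subset fun x => hρ.mp).trans (hW v), fun d v hv => ?_⟩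
  by_contra! h
  obtain ⟨B, hB, hBκ⟩ := le_mk_iff_exists_subset.mp h
  have hd : d ∈ W v := isClosedUnder_kClosure _ _ _ B (fun b hb => hρ.mp (hB hb).2) hBκ
    fun b hb => (hB hb).1
  exact (hρ.mpr hd).not_gt hv

end Rank

section UniversalGraph

variable {I L N : Type} [LinearOrder I]

def IsAdmissible (κ : Cardi) (i : I) (Y : Set (I × L × N)) : Prop :=
  (∀ y ∈ Y, y.1 < i) ∧ #Y ≤ κ ∧ ∀ g < i, #{y ∈ Y | y.1 ≤ g} < κ

def univGraph (D : I → L → Set (I × L × N)) : SimpleGraph (I × L × N) :=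
  SimpleGraph.fromRel fun p q => p.1 = q.1 ∨ q ∈ D p.1 p.2.1

theorem noKbip_univGraph {θ κ : Cardi} {D : I → L → Set (I × L × N)}
    (hD : ∀ i ℓ, IsAdmissible κ i (D i ℓ)) (hbdd : ∀ s : Set I, #s ≤ κ → ∃ u, ∀ i ∈ s, i < u)
    (hsmall : ∀ u : I, #{p : I × L × N | p.1 ≤ u} < θ) : NoKbip (univGraph D) θ κ := by
  rintro ⟨A, B, -, hAθ, hBκ, hAB⟩
  obtain ⟨u, hu⟩ := hbdd (Prod.fst '' B) (mk_image_le.trans hBκ.le)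
  have hA : A ⊆ {p | p.1 ≤ u} := fun a ha => le_of_not_gt fun hua => by
    have hB : B ⊆ {y ∈ D a.1 a.2.1 | y.1 ≤ u} := fun b hb => by
      have hbu := hu _ (mem_image_of_mem _ hb)
      have hab := hAB a ha b hb
      rw [univGraph, SimpleGraph.fromRel_adj] at hab
      obtain ⟨-, (h | h) | (h | h)⟩ := hab
      · exact absurd h (hbu.trans hua).ne'
      · exact ⟨h, hbu.le⟩
      · exact absurd h (hbu.trans hua).ne
      · exact absurd ((hD _ _).1 a h) (hbu.trans hua).not_gt
    exact ((hD _ _).2.2 u hua).not_ge (hBκ ▸ mk_le_mk_of_subset hB)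
  exact (hsmall u).not_ge (hAθ ▸ mk_le_mk_of_subset hA)

variable [WellFoundedLT I] [Nonempty L] {α : Type}

noncomputable def univEmb (G : SimpleGraph α) (ρ : α → I) (cnt : α → N)
    (D : I → L → Set (I × L × N)) : α → I × L × N :=
  (InvImage.wf ρ wellFounded_lt).fix fun d emb =>
    (ρ d, invFun (D (ρ d)) {z | ∃ x, ∃ h : ρ x < ρ d, G.Adj d x ∧ emb x h = z}, cnt d)

variable {G : SimpleGraph α} {ρ : α → I} {cnt : α → N} {D : I → L → Set (I × L × N)}

theorem univEmb_eq (d : α) : univEmb G ρ cnt D d =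
    (ρ d, invFun (D (ρ d)) (univEmb G ρ cnt D '' {x | G.Adj d x ∧ ρ x < ρ d}), cnt d) := by
  rw [univEmb, WellFounded.fix_eq]
  congr
  ext z
  simp only [mem_ofPred_eq]
  constructor
  · rintro ⟨x, hx, hadj, rfl⟩
    exact ⟨x, ⟨hadj, hx⟩, rfl⟩
  · rintro ⟨x, ⟨hadj, hx⟩, rfl⟩
    exact ⟨x, hx, hadj, rfl⟩

theorem fst_univEmb (d : α) : (univEmb G ρ cnt D d).1 = ρ d := by
  rw [univEmb_eq]

theorem isAdmissible_univEmb_image {κ : Cardi} (hκ : ℵ₀ ≤ κ)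
    (hρ : ∀ d, ∀ i < ρ d, #{x | G.Adj d x ∧ ρ x ≤ i} < κ) (d : α) :
    IsAdmissible κ (ρ d) (univEmb G ρ cnt D '' {x | G.Adj d x ∧ ρ x < ρ d}) := by
  refine ⟨?_, ?_, fun g hg => ?_⟩
  · rintro _ ⟨x, hx, rfl⟩
    rw [fst_univEmb]
    exact hx.2
  · refine mk_image_le.trans (mk_le_of_forall_mk_rank_le_lt hκ ρ fun x hx => ?_)
    have hsub : {y ∈ {x | G.Adj d x ∧ ρ x < ρ d} | ρ y ≤ ρ x} ⊆ {y | G.Adj d y ∧ ρ y ≤ ρ x} :=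
      fun y hy => ⟨hy.1.1, hy.2⟩
    exact (mk_le_mk_of_subset hsub).trans_lt (hρ d _ hx.2)
  · have hsub : {y ∈ univEmb G ρ cnt D '' {x | G.Adj d x ∧ ρ x < ρ d} | y.1 ≤ g} ⊆
        univEmb G ρ cnt D '' {x | G.Adj d x ∧ ρ x ≤ g} := by
      rintro _ ⟨⟨x, hx, rfl⟩, hxg⟩
      rw [fst_univEmb] at hxg
      exact ⟨x, ⟨hx.1, hxg⟩, rfl⟩
    exact (mk_le_mk_of_subset hsub).trans_lt (mk_image_le.trans_lt (hρ d g hg))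

theorem weakEmb_univEmb {κ : Cardi} (hκ : ℵ₀ ≤ κ)
    (hD : ∀ i, range (D i) = {Y | IsAdmissible κ i Y})
    (hcnt : Injective fun x => (ρ x, cnt x))
    (hρ : ∀ d, ∀ i < ρ d, #{x | G.Adj d x ∧ ρ x ≤ i} < κ) :
    WeakEmb G (univGraph D) (univEmb G ρ cnt D) := by
  have hlab : ∀ d, D (ρ d) (univEmb G ρ cnt D d).2.1 =
      univEmb G ρ cnt D '' {x | G.Adj d x ∧ ρ x < ρ d} := fun d => by
    rw [univEmb_eq]
    refine invFun_eq (show _ ∈ range (D (ρ d)) from ?_)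
    rw [hD]
    exact isAdmissible_univEmb_image hκ hρ d
  have hinj : Injective (univEmb G ρ cnt D) := fun a b h => by
    rw [univEmb_eq, univEmb_eq] at h
    simp only [Prod.mk.injEq] at h
    exact hcnt (Prod.ext h.1 h.2.2)
  refine ⟨hinj, fun a b hab => ?_⟩
  rw [univGraph, SimpleGraph.fromRel_adj]
  refine ⟨hinj.ne hab.ne, ?_⟩
  simp only [fst_univEmb, hlab]
  rcases lt_trichotomy (ρ a) (ρ b) with h | h | h
  · exact Or.inr (Or.inr ⟨a, ⟨hab.symm, h⟩, rfl⟩)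
  · exact Or.inl (Or.inl h)
  · exact Or.inl (Or.inr ⟨b, ⟨hab, h⟩, rfl⟩)

end UniversalGraph

section Construction

variable {I L N : Type} [LinearOrder I]

theorem mk_isAdmissible_le {κ μ : Cardi} (hμ : ℵ₀ ≤ μ) (hpow : μ ^ κ = μ) {i : I}
    (hi : #{p : I × L × N | p.1 < i} ≤ μ) : #{Y : Set (I × L × N) | IsAdmissible κ i Y} ≤ μ :=
  calc #{Y : Set (I × L × N) | IsAdmissible κ i Y}
      ≤ #{Y : Set (I × L × N) | Y ⊆ {p | p.1 < i} ∧ #Y ≤ κ} :=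
        mk_le_mk_of_subset fun _ hY => ⟨hY.1, hY.2.1⟩
    _ ≤ max #{p : I × L × N | p.1 < i} ℵ₀ ^ κ := mk_bounded_subset_le _ κ
    _ ≤ μ ^ κ := power_le_power_right (max_le hi hμ)
    _ = μ := hpow

theorem exists_range_eq_isAdmissible {κ : Cardi} (hκ : κ ≠ 0)
    (hL : ∀ i : I, #{Y : Set (I × L × N) | IsAdmissible κ i Y} ≤ #L) :
    ∃ D : I → L → Set (I × L × N), ∀ i, range (D i) = {Y | IsAdmissible κ i Y} := by
  have hempty : ∀ i : I, IsAdmissible κ i (∅ : Set (I × L × N)) := fun i =>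
    ⟨by simp, by simp, fun _ _ => by simpa [pos_iff_ne_zero]⟩
  choose f hf using fun i => exists_surjective_iff.mpr
    ⟨⟨fun _ => (⟨∅, hempty i⟩ : {Y | IsAdmissible κ i Y})⟩, (le_def _ _).mp (hL i)⟩
  exact ⟨fun i => Subtype.val ∘ f i, fun i => by rw [(hf i).range_comp, Subtype.range_coe]⟩

theorem exists_weakUniversal {κ μ : Cardi} (hκ : ℵ₀ ≤ κ) (hκμ : κ < μ) (hpow : μ ^ κ = μ) :
    ∃ H : SimpleGraph ((Order.succ μ).ord.ToType × μ.ord.ToType × μ.ord.ToType),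
      NoKbip H (Order.succ μ) κ ∧ ∀ G : SimpleGraph (Order.succ μ).ord.ToType,
        NoKbip G (Order.succ μ) κ → ∃ f, WeakEmb G H f := by
  have hμ : ℵ₀ ≤ μ := hκ.trans hκμ.le
  have hblk : ∀ u : (Order.succ μ).ord.ToType,
      #{p : _ × μ.ord.ToType × μ.ord.ToType | p.1 ≤ u} ≤ μ := fun u => by
    have : {p : _ × μ.ord.ToType × μ.ord.ToType | p.1 ≤ u} = Iic u ×ˢ Set.univ := by ext; simp
    rw [this, mk_congr (Equiv.Set.prod _ _)]
    simp only [mk_prod, mk_univ, lift_id, mk_ord_toType, mul_eq_self hμ]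
    exact (mul_le_mul_left (mk_Iic_toType_succ_le hμ u) μ).trans (mul_eq_self hμ).le
  obtain ⟨D, hD⟩ := exists_range_eq_isAdmissible (aleph0_pos.trans_le hκ).ne' fun i =>
    (mk_isAdmissible_le hμ hpow ((mk_le_mk_of_subset fun p hp => le_of_lt hp).trans
      (hblk i))).trans (by simp)
  refine ⟨univGraph D, noKbip_univGraph (fun i ℓ => (hD i).subset ⟨ℓ, rfl⟩)
    (fun s hs => exists_forall_lt_of_mk_lt (isRegular_succ hμ)
      (hs.trans_lt (hκμ.trans (Order.lt_succ μ))))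
    (fun u => (hblk u).trans_lt (Order.lt_succ μ)), fun G hG => ?_⟩
  obtain ⟨ρ, hρμ, hρ⟩ := exists_rank hκ hκμ hpow (mk_Iic_toType_succ_le hμ) G
    fun B hB => Order.lt_succ_iff.mp (mk_commonNbhd_lt hG hB)
  obtain ⟨cnt, hcnt⟩ := exists_injective_prod_of_mk_fiber_le (N := μ.ord.ToType) ρ fun i =>
    ((mk_le_mk_of_subset (fun x hx => le_of_eq hx)).trans (hρμ i)).trans (by simp)
  have : Nonempty μ.ord.ToType := by
    rw [← mk_ne_zero_iff, mk_ord_toType]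
    exact (aleph0_pos.trans_le hμ).ne'
  exact ⟨_, weakEmb_univEmb hκ hD hcnt hρ⟩

end Construction

end KBipartiteFree

theorem NoKbip.comap {V W : Type} {H : SimpleGraph W} {θ κ : Cardi} (h : NoKbip H θ κ)
    {f : V → W} (hf : Function.Injective f) : NoKbip (H.comap f) θ κ := by
  rintro ⟨A, B, hAB, hA, hB, hadj⟩
  refine h ⟨f '' A, f '' B, (disjoint_image_iff hf).mpr hAB, by rwa [mk_image_eq hf],
    by rwa [mk_image_eq hf], ?_⟩
  rintro _ ⟨a, ha, rfl⟩ _ ⟨b, hb, rfl⟩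
  exact hadj a ha b hb

/-- If `λ = μ⁺`, `κ < μ`, `θ = λ` and `μ = μ^κ`, then `𝔥_{λ,λ,κ}` has a we-universal
member. -/
theorem stmt_19 (lam mu kap : Cardi) (h0 : ℵ₀ ≤ kap) (h1 : kap < mu)
    (h2 : lam = Order.succ mu) (h3 : mu ^ kap = mu) :
    ∃ Gstar : SimpleGraph (Ordinal.ToType lam.ord), NoKbip Gstar lam kap ∧
      ∀ G : SimpleGraph (Ordinal.ToType lam.ord), NoKbip G lam kap →
        ∃ f, WeakEmb G Gstar f := by
  subst h2
  obtain ⟨H, hH, huniv⟩ := KBipartiteFree.exists_weakUniversal h0 h1 h3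
  obtain ⟨e⟩ := Cardinal.eq.mp <|
    (mk_ord_toType _).trans (KBipartiteFree.mk_toType_succ_prod (h0.trans h1.le)).symm
  refine ⟨H.comap e, hH.comap e.injective, fun G hG => ?_⟩
  obtain ⟨f, hf, hadj⟩ := huniv G hG
  exact ⟨e.symm ∘ f, e.symm.injective.comp hf, fun a b h => by simpa using hadj a b h⟩
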